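/- arXiv:2012.01000 — 2 statements merged into one kernel-verified Lean document; each statement's English description precedes it below -/
import Mathlib

section
/- Both Numerov coefficients αₕ = 2 - h₊²/(h·ĥ) and βₕ = 2 - h²/(h₊·ĥ) (with ĥ = (h+h₊)/2) are nonnegative if and only if the mesh step ratio satisfies 2/(√5 + 1) ≤ h₊/h ≤ (√5 + 1)/2. -/
/-- Nonnegativity of both Numerov coefficients is equivalent to the
golden-ratio bound on the mesh step ratio. -/
theorem numerov_coeff_nonneg_iff (h hp : ℝ) (hh : 0 < h) (hhp : 0 < hp) :
    (0 ≤ 2 - hp ^ 2 / (h * ((h + hp) / 2)) ∧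
      0 ≤ 2 - h ^ 2 / (hp * ((h + hp) / 2))) ↔
    (2 / (Real.sqrt 5 + 1) ≤ hp / h ∧ hp / h ≤ (Real.sqrt 5 + 1) / 2) := by
  have s5 : Real.sqrt 5 ^ 2 = 5 := Real.sq_sqrt (by norm_num)
  have s5ge : (2:ℝ) ≤ Real.sqrt 5 := by
    nlinarith [Real.sqrt_nonneg 5]
  have hden1 : 0 < h * ((h + hp) / 2) := by positivity
  have hden2 : 0 < hp * ((h + hp) / 2) := by positivity
  have hs1 : (0:ℝ) < Real.sqrt 5 + 1 := by linarith
  rw [sub_nonneg, sub_nonneg, div_le_iff₀ hden1, div_le_iff₀ hden2,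
    div_le_div_iff₀ hs1 hh, div_le_div_iff₀ hh (by norm_num : (0:ℝ) < 2)]
  have key : ∀ a b : ℝ, 0 < a → 0 < b → a ^ 2 ≤ b ^ 2 + a * b →
      2 * a ≤ (Real.sqrt 5 + 1) * b := by
    intro a b ha hb hab
    by_contra hc
    push_neg at hc
    have hf : 0 < 2 * a + (Real.sqrt 5 - 1) * b := by nlinarith
    nlinarith [mul_pos (by linarith : (0:ℝ) < 2 * a - (Real.sqrt 5 + 1) * b) hf]
  constructor
  · rintro ⟨h1, h2⟩
    have k1 := key h hp hh hhp (by nlinarith)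
    have k2 := key hp h hhp hh (by nlinarith)
    constructor
    · linarith
    · linarith
  · rintro ⟨h1, h2⟩
    constructor
    · nlinarith [mul_pos hh hhp, mul_pos hh hh, mul_pos hhp hhp]
    · nlinarith [mul_pos hh hhp, mul_pos hh hh, mul_pos hhp hhp]
end

section
/- Under the hypotheses α_I² ≤ ε̃ + α_R(2a₀ - α_R) with ε̃ = ε/(2-ε), a₀ = (1+2ε)/(2(2-ε)), 0 < ε < 2, it follows that max(|α_R - a₀|, |α_I|) ≤ a₀ + √ε̃ and |1 + α|² ≤ 1 + ε̃ + 2(1 + a₀)(2a₀ + √ε̃). -/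
/-- Bounds on `α` following from the disk-like inequality. -/
theorem alpha_bounds (αR αI ε : ℝ) (hε0 : 0 < ε) (hε2 : ε < 2)
    (hdisk : αI ^ 2 ≤ ε / (2 - ε) +
      αR * (2 * ((1 + 2 * ε) / (2 * (2 - ε))) - αR)) :
    max |αR - (1 + 2 * ε) / (2 * (2 - ε))| |αI| ≤
      (1 + 2 * ε) / (2 * (2 - ε)) + Real.sqrt (ε / (2 - ε)) ∧
    (1 + αR) ^ 2 + αI ^ 2 ≤
      1 + ε / (2 - ε) +
        2 * (1 + (1 + 2 * ε) / (2 * (2 - ε))) *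
          (2 * ((1 + 2 * ε) / (2 * (2 - ε))) + Real.sqrt (ε / (2 - ε))) := by
  set t := ε / (2 - ε) with htdef
  set a := (1 + 2 * ε) / (2 * (2 - ε)) with hadef
  have h2ε : (0:ℝ) < 2 - ε := by linarith
  have ht : 0 ≤ t := div_nonneg hε0.le h2ε.le
  have ha : 0 < a := div_pos (by linarith) (by linarith)
  have h1 : (αR - a) ^ 2 + αI ^ 2 ≤ t + a ^ 2 := by nlinarith [hdisk]
  have hst := Real.sqrt_nonneg t
  have hsq : Real.sq_sqrt ht = _ := rfl
  have hs2 : Real.sqrt t ^ 2 = t := Real.sq_sqrt ht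
  have hsqrt : Real.sqrt (t + a ^ 2) ≤ Real.sqrt t + a := by
    rw [show t + a ^ 2 = Real.sqrt ((Real.sqrt t) ^ 2 + a^2) ^ 2 by
      rw [Real.sq_sqrt (by positivity)]; rw [hs2]]
    rw [Real.sqrt_sq (Real.sqrt_nonneg _)]
    nlinarith [Real.sq_sqrt (show (0:ℝ) ≤ (Real.sqrt t)^2 + a^2 by positivity),
      Real.sqrt_nonneg ((Real.sqrt t)^2 + a^2)]
  have hR : |αR - a| ≤ a + Real.sqrt t := by
    have : |αR - a| ≤ Real.sqrt (t + a ^ 2) := by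
      rw [← Real.sqrt_sq_eq_abs]
      exact Real.sqrt_le_sqrt (by nlinarith)
    linarith
  have hI : |αI| ≤ a + Real.sqrt t := by
    have : |αI| ≤ Real.sqrt (t + a ^ 2) := by
      rw [← Real.sqrt_sq_eq_abs]
      exact Real.sqrt_le_sqrt (by nlinarith)
    linarith
  refine ⟨max_le hR hI, ?_⟩
  have hαR : αR ≤ 2 * a + Real.sqrt t := by
    have := abs_le.mp hR
    linarith [this.2]
  nlinarith [hdisk, ha, hst]
end
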